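/- For any linear map L : ℝ^m → ℝ^n with n ≤ m, the supremum over all orthogonal projections π : ℝ^m → ℝ^{m−n} (i.e. surjective linear maps with π ∘ π* = I_{m−n}) of |M_n L ⌟ dπ| equals |M_n L|, where dπ = dπ^1 ∧ … ∧ dπ^{m−n}; moreover the supremum is attained by the orthogonal projection onto ker L when L has rank n. -/

import Mathlib

open MeasureTheory Filter Topology
open scoped BigOperators ENNReal MeasureTheory

noncomputable section

abbrev Pt (m : ℕ) := Fin m → ℝ

abbrev Idx (m k : ℕ) := {s : Finset (Fin m) // s.card = k}

abbrev Form (m k : ℕ) := Pt m → Idx m k → ℝ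

/-- Euclidean norm on `Fin n → ℝ`. -/
def enorm' {n : ℕ} (v : Fin n → ℝ) : ℝ := Real.sqrt (∑ i, (v i) ^ 2)

/-- Frobenius norm of a matrix. -/
def mnorm {n m : ℕ} (G : Matrix (Fin n) (Fin m) ℝ) : ℝ :=
  Real.sqrt (∑ i, ∑ j, (G i j) ^ 2)

/-- The shuffle permutation sending `(1,…,m)` to `(s, sᶜ)` (each in increasing order). -/
def shufflePerm {m : ℕ} (s : Finset (Fin m)) : Equiv.Perm (Fin m) :=
  (finCongr (Nat.add_sub_cancel' (by simpa using s.card_le_univ)).symm).trans <|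
    finSumFinEquiv.symm.trans <|
      (Equiv.sumCongr (s.orderIsoOfFin rfl).toEquiv
        (((sᶜ).orderIsoOfFin (by simp [Finset.card_compl])).toEquiv.trans
          (Equiv.subtypeEquivRight (fun x => Finset.mem_compl)))).trans
        (Equiv.sumCompl (· ∈ s))

/-- Sign of the shuffle permutation `(1,…,m) ↦ (s, sᶜ)`. -/
def shuffleSign {m : ℕ} (s : Finset (Fin m)) : ℝ :=
  ((Equiv.Perm.sign (shufflePerm s) : ℤ) : ℝ)

/-- Coefficient (w.r.t. `dx¹∧…∧dxᵐ`) of the wedge of a `p`-covector with a `q`-covector,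
`p + q = m`, both given by their coordinates on increasing multi-indices. -/
def wedgeTop {m p q : ℕ} (h : p + q = m) (α : Idx m p → ℝ) (β : Idx m q → ℝ) : ℝ :=
  ∑ s : Idx m p, shuffleSign s.1 * α s *
    β ⟨(s.1)ᶜ, by
      have hs := s.2
      simp only [Finset.card_compl, Fintype.card_fin, hs]
      omega⟩

/-- Exterior differential of a `k`-form given in coordinates. -/
def extDerivCoord {m k : ℕ} (ω : Form m k) : Form m (k + 1) :=
  fun x t => ∑ j ∈ (t.1).attach,
    ((-1 : ℝ)) ^ ((t.1.filter (fun a => a < j.1)).card) *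
      fderiv ℝ (fun y => ω y ⟨t.1.erase j.1, by
        simp [Finset.card_erase_of_mem j.2, t.2]⟩) x (Pi.single j.1 1)

/-- Smooth compactly supported test forms in an open set `Ω`. -/
def IsTestForm {m k : ℕ} (Ω : Set (Pt m)) (ω : Form m k) : Prop :=
  (∀ s, ContDiff ℝ (⊤ : ℕ∞) fun x => ω x s) ∧
    ∃ K : Set (Pt m), IsCompact K ∧ K ⊆ Ω ∧ ∀ x ∉ K, ω x = 0

/-- `G` is the weak (distributional) gradient of `u` on `Ω`; `G x i j = ∂ⱼ uⁱ (x)`. -/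
def IsWeakGradient {m n : ℕ} (Ω : Set (Pt m)) (u : Pt m → Fin n → ℝ)
    (G : Pt m → Matrix (Fin n) (Fin m) ℝ) : Prop :=
  ∀ φ : Pt m → ℝ, ContDiff ℝ (⊤ : ℕ∞) φ → HasCompactSupport φ → tsupport φ ⊆ Ω →
    ∀ i j, ∫ x in Ω, u x i * fderiv ℝ φ x (Pi.single j 1) = - ∫ x in Ω, G x i j * φ x

/-- Coordinates of the `(n-1)`-form `du² ∧ … ∧ duⁿ` built from a gradient matrix. -/
def minorForm {m n : ℕ} (G : Matrix (Fin n) (Fin m) ℝ) : Idx m (n - 1) → ℝ :=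
  fun s => Matrix.det (Matrix.of fun i j : Fin (n - 1) =>
    G ⟨i.1 + 1, by have := i.2; omega⟩ ((s.1.orderIsoOfFin s.2) j))

/-- Coordinates of the `n`-form `du¹ ∧ … ∧ duⁿ` (the n×n minors of the gradient). -/
def topMinor {m n : ℕ} (G : Matrix (Fin n) (Fin m) ℝ) : Idx m n → ℝ :=
  fun s => Matrix.det (Matrix.of fun i j : Fin n => G i ((s.1.orderIsoOfFin s.2) j))

/-- Action of the distributional Jacobian `Ju = ∂ j(u)` on an `(m-n)`-form:
`Ju(ω) = (-1)^n ∫_Ω u¹ du² ∧ … ∧ duⁿ ∧ dω`. -/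
def jacPair {m n : ℕ} (hn : 1 ≤ n) (hm : n ≤ m) (Ω : Set (Pt m))
    (u : Pt m → Fin n → ℝ) (G : Pt m → Matrix (Fin n) (Fin m) ℝ)
    (ω : Form m (m - n)) : ℝ :=
  (-1 : ℝ) ^ n * ∫ x in Ω, u x ⟨0, hn⟩ *
    wedgeTop (by omega) (minorForm (G x)) (extDerivCoord ω x)

/-- Coordinates of the simple `k`-vector `v₁ ∧ … ∧ v_k`. -/
def wedgeCoord {m k : ℕ} (v : Fin k → Pt m) : Idx m k → ℝ :=
  fun s => Matrix.det (Matrix.of fun i j : Fin k => v i ((s.1.orderIsoOfFin s.2) j))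

/-- Comass norm of a `k`-covector. -/
def comass {m k : ℕ} (φ : Idx m k → ℝ) : ℝ :=
  sSup {r | ∃ v : Fin k → Pt m, (∀ i, enorm' (v i) ≤ 1) ∧ r = ∑ s, φ s * wedgeCoord v s}

/-- Mass norm of a `k`-vector, dual to comass. -/
def massNorm {m k : ℕ} (ξ : Idx m k → ℝ) : ℝ :=
  sSup {r | ∃ φ : Idx m k → ℝ, comass φ ≤ 1 ∧ r = ∑ s, ξ s * φ s}

/-- Euclidean norm of a `k`-vector. -/
def eucNorm {m k : ℕ} (ξ : Idx m k → ℝ) : ℝ := Real.sqrt (∑ s, (ξ s) ^ 2)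

/-- The coordinates of `MₙL = (e₁∧…∧e_m) ⌟ (L¹∧…∧Lⁿ)`: the coordinate on `e_s`
is the determinant of the matrix obtained by stacking `L` on top of the rows `e^{s(i)}`. -/
def MnVecG {m n : ℕ} (hm : n ≤ m) (L : Matrix (Fin n) (Fin m) ℝ) : Idx m (m - n) → ℝ :=
  fun s => Matrix.det (Matrix.of fun i j : Fin m =>
    if h : i.1 < n then L ⟨i.1, h⟩ j
    else if (s.1.orderIsoOfFin s.2) ⟨i.1 - n, by have := i.2; omega⟩ = j then 1 else 0)

/-- `MₙL ⌟ dπ`: determinant of `L` stacked over `π`. -/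
def contractDet {m n : ℕ} (hm : n ≤ m) (L : Matrix (Fin n) (Fin m) ℝ)
    (P : Matrix (Fin (m - n)) (Fin m) ℝ) : ℝ :=
  Matrix.det (Matrix.of fun i j : Fin m =>
    if h : i.1 < n then L ⟨i.1, h⟩ j else P ⟨i.1 - n, by have := i.2; omega⟩ j)

/-- A form vanishes on a neighbourhood of each point of `S`. -/
def VanishNear {m k : ℕ} (S : Set (Pt m)) (ω : Form m k) : Prop :=
  ∀ x ∈ S, ∃ ε > 0, ∀ y ∈ Metric.ball x ε, ω y = 0

/-- `u ∈ GSB_nV(Ω)` witnessed by the data `(ρ, S)`: the Jacobian `Ju` decomposes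
as `R + T` with `R = ρ·ℒᵐ` absolutely continuous with finite mass and `T`
concentrated on a set `S` of finite `ℋ^{m-n}` measure (finite size). -/
def IsGSBRep {m n : ℕ} (hn : 1 ≤ n) (hm : n ≤ m) (Ω : Set (Pt m))
    (u : Pt m → Fin n → ℝ) (G : Pt m → Matrix (Fin n) (Fin m) ℝ)
    (ρ : Pt m → Idx m (m - n) → ℝ) (S : Set (Pt m)) : Prop :=
  Integrable (fun x => eucNorm (ρ x)) (volume.restrict Ω) ∧
  μH[((m : ℝ) - (n : ℝ))] S < ⊤ ∧
  ∀ ω : Form m (m - n), IsTestForm Ω ω → VanishNear S ω →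
    jacPair hn hm Ω u G ω = ∫ x in Ω, ∑ s, ρ x s * ω x s

end

/-!
Since the determinant of `L` stacked over `π` is alternating in the rows of `π`, expanding it in
the standard basis gives `MₙL ⌟ dπ = ∑ₛ πₛ · (MₙL)ₛ`, where `πₛ` is the minor of `π` on the
columns `s`; by Cauchy–Binet `∑ₛ πₛ² = det (π πᵀ) = 1`, so Cauchy–Schwarz gives the upper bound.
Conversely, the Schur complement of the Gram matrix of the stacked matrix shows
`(MₙL ⌟ dπ)² = det (L Lᵀ - L πᵀ π Lᵀ)`. Taking for `π` the coordinate projection onto `e_s`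
turns this into `(MₙL)ₛ² = (minor of L on sᶜ)²`, hence `|MₙL|² = det (L Lᵀ)` by Cauchy–Binet;
taking for `π` a projection with `L πᵀ = 0`, which exists since `dim ker L ≥ m - n`, it gives
`(MₙL ⌟ dπ)² = det (L Lᵀ) = |MₙL|²`.
-/

noncomputable section

open Matrix

section Minors

variable {R : Type*} [CommRing R] {m k : ℕ}

def idxEmb (s : Idx m k) : Fin k ↪o Fin m := s.1.orderEmbOfFin s.2

theorem sum_comp_idxEmb {M : Type*} [AddCommMonoid M] (s : Idx m k) (f : Fin m → M) :
    ∑ a, f (idxEmb s a) = ∑ x ∈ s.1, f x := by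
  rw [← Finset.map_orderEmbOfFin_univ s.1 s.2, Finset.sum_map]
  rfl

def Matrix.colMinor (A : Matrix (Fin k) (Fin m) R) (s : Idx m k) : R :=
  (A.submatrix id (idxEmb s)).det

theorem AlternatingMap.eq_sum_colMinor_mul (F : (Fin m → R) [⋀^Fin k]→ₗ[R] R)
    (v : Fin k → Fin m → R) :
    F v = ∑ s : Idx m k, (of v).colMinor s * F (fun i => Pi.single (idxEmb s i) 1) := by
  let b := (Pi.basisFun R (Fin m)).exteriorPower k
  rw [← exteriorPower.alternatingMapLinearEquiv_apply_ιMulti,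
    ← b.sum_repr (exteriorPower.ιMulti R k v), map_sum]
  -- `Idx m k` and `Set.powersetCard (Fin m) k` are the same type with different `Fintype` instances
  refine Finset.sum_nbij' id id (fun _ _ => Finset.mem_univ _) (fun _ _ => Finset.mem_univ _)
    (fun _ _ => rfl) (fun _ _ => rfl) fun s _ => ?_
  rw [map_smul, exteriorPower.basis_repr_apply, exteriorPower.ιMultiDual_apply_ιMulti,
    exteriorPower.basis_apply, exteriorPower.ιMulti_family,
    exteriorPower.alternatingMapLinearEquiv_apply_ιMulti, smul_eq_mul]
  simp only [Module.Basis.coord_apply, Pi.basisFun_repr, Function.comp_def, Pi.basisFun_apply,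
    Set.powersetCard.ofFinEmbEquiv_symm_apply]
  rfl

theorem Matrix.det_mul_eq_sum_colMinor_mul_colMinor (A : Matrix (Fin k) (Fin m) R)
    (B : Matrix (Fin m) (Fin k) R) :
    (A * B).det = ∑ s : Idx m k, A.colMinor s * Bᵀ.colMinor s := by
  refine ((detRowAlternating.compLinearMap B.vecMulLinear).eq_sum_colMinor_mul fun i => A i).trans
    (Finset.sum_congr rfl fun s _ => congrArg _ ?_)
  rw [colMinor, ← det_transpose]
  show det (of fun i => _ ᵥ* B) = _
  congr 1
  ext i j
  simp [single_vecMul]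

theorem Matrix.det_mul_transpose_self_eq_sum_colMinor_sq (A : Matrix (Fin k) (Fin m) R) :
    (A * Aᵀ).det = ∑ s : Idx m k, A.colMinor s ^ 2 := by
  simp only [det_mul_eq_sum_colMinor_mul_colMinor, transpose_transpose, sq]

end Minors

section OrthogonalRows

variable {m n k : ℕ}

def coordProj (s : Idx m k) : Matrix (Fin k) (Fin m) ℝ :=
  (1 : Matrix (Fin m) (Fin m) ℝ).submatrix (idxEmb s) id

theorem coordProj_apply (s : Idx m k) (i : Fin k) :
    coordProj s i = Pi.single (idxEmb s i) 1 := by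
  ext j
  simp [coordProj, one_apply, Pi.single_apply, eq_comm]

theorem coordProj_mul_transpose (s : Idx m k) : coordProj s * (coordProj s)ᵀ = 1 := by
  rw [coordProj, transpose_submatrix, transpose_one,
    ← submatrix_mul _ _ _ _ _ Function.bijective_id, mul_one, submatrix_one _ (idxEmb s).injective]

theorem mul_transpose_coordProj (L : Matrix (Fin n) (Fin m) ℝ) (s : Idx m k) :
    L * (coordProj s)ᵀ = L.submatrix id (idxEmb s) := by
  ext i j
  simp [coordProj, mul_apply, one_apply]

theorem exists_mul_transpose_eq_one_and_mul_transpose_eq_zero (L : Matrix (Fin n) (Fin m) ℝ)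
    (hk : k + n ≤ m) : ∃ P : Matrix (Fin k) (Fin m) ℝ, P * Pᵀ = 1 ∧ L * Pᵀ = 0 := by
  have hK : k ≤ Module.finrank ℝ (LinearMap.ker (toEuclideanLin L)) := by
    have := LinearMap.finrank_range_add_finrank_ker (toEuclideanLin L)
    have := Submodule.finrank_le (LinearMap.range (toEuclideanLin L))
    simp only [finrank_euclideanSpace, Fintype.card_fin] at *
    omega
  let b := stdOrthonormalBasis ℝ (LinearMap.ker (toEuclideanLin L))
  let v : Fin k → EuclideanSpace ℝ (Fin m) := fun i => b (Fin.castLE hK i)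
  have hv : Orthonormal ℝ v :=
    (b.orthonormal.comp _ (Fin.castLE_injective hK)).comp_linearIsometry (Submodule.subtypeₗᵢ _)
  refine ⟨of fun i j => v i j, ?_, ?_⟩
  · rw [← gram_eq_one_iff_orthonormal.mpr hv]
    ext i j
    simp only [gram, mul_apply, PiLp.inner_apply, of_apply, transpose_apply]
    exact Finset.sum_congr rfl fun l _ => by rw [RCLike.inner_apply, conj_trivial, mul_comm]
  · ext i j
    have hvj : toEuclideanLin L (v j) = 0 := (b (Fin.castLE hK j)).2
    simpa [mulVec, dotProduct, mul_apply] using congrArg (fun w => w i) hvj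

end OrthogonalRows

section Contraction

variable {m n : ℕ} (hm : n ≤ m) (L : Matrix (Fin n) (Fin m) ℝ)

def sumFinEquiv : Fin n ⊕ Fin (m - n) ≃ Fin m :=
  finSumFinEquiv.trans (finCongr (Nat.add_sub_cancel' hm))

theorem contractDet_eq_det_fromRows (P : Matrix (Fin (m - n)) (Fin m) ℝ) :
    contractDet hm L P = ((fromRows L P).submatrix (sumFinEquiv hm).symm id).det := by
  unfold contractDet
  congr 1
  ext i j
  by_cases h : i.1 < n
  · have : (sumFinEquiv hm).symm i = .inl ⟨i, h⟩ :=
      (Equiv.symm_apply_eq _).mpr (Fin.ext (by simp [sumFinEquiv]))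
    simp [h, this]
  · have : (sumFinEquiv hm).symm i = .inr ⟨i - n, by omega⟩ :=
      (Equiv.symm_apply_eq _).mpr (Fin.ext (by simp [sumFinEquiv]; omega))
    simp [h, this]

theorem contractDet_of_update [DecidableEq (Fin (m - n))] (v : Fin (m - n) → Fin m → ℝ)
    (i : Fin (m - n)) (x : Fin m → ℝ) :
    contractDet hm L (of (Function.update v i x)) =
      (((fromRows L (of v)).submatrix (sumFinEquiv hm).symm id).updateRow
        (sumFinEquiv hm (.inr i)) x).det := by
  rw [contractDet_eq_det_fromRows]
  congr 1
  ext a j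
  rcases h : (sumFinEquiv hm).symm a with b | b
  · simp [updateRow_apply, h, ← Equiv.symm_apply_eq]
  · by_cases hb : b = i <;> simp [updateRow_apply, h, ← Equiv.symm_apply_eq, hb]

def contractDetAlternating : (Fin m → ℝ) [⋀^Fin (m - n)]→ₗ[ℝ] ℝ where
  toFun v := contractDet hm L (of v)
  map_update_add' v i x y := by
    simp only [contractDet_of_update, det_updateRow_add]
  map_update_smul' v i c x := by
    simp only [contractDet_of_update, det_updateRow_smul, smul_eq_mul]
  map_eq_zero_of_eq' v i j hij hne := by
    rw [contractDet_eq_det_fromRows]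
    refine det_zero_of_row_eq (i := sumFinEquiv hm (.inr i)) (j := sumFinEquiv hm (.inr j))
      (by simpa using hne) ?_
    ext c
    simp [hij]

theorem MnVecG_eq_contractDet_coordProj (s : Idx m (m - n)) :
    MnVecG hm L s = contractDet hm L (coordProj s) :=
  rfl

theorem contractDet_eq_sum_colMinor_mul_MnVecG (P : Matrix (Fin (m - n)) (Fin m) ℝ) :
    contractDet hm L P = ∑ s, P.colMinor s * MnVecG hm L s := by
  refine ((contractDetAlternating hm L).eq_sum_colMinor_mul fun i => P i).trans ?_
  simp only [MnVecG_eq_contractDet_coordProj, ← coordProj_apply]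
  rfl

theorem contractDet_sq (P : Matrix (Fin (m - n)) (Fin m) ℝ) :
    contractDet hm L P ^ 2 = (fromBlocks (L * Lᵀ) (L * Pᵀ) (P * Lᵀ) (P * Pᵀ)).det := by
  rw [contractDet_eq_det_fromRows, sq]
  nth_rw 2 [← det_transpose]
  rw [← det_mul, transpose_submatrix, ← submatrix_mul _ _ _ _ _ Function.bijective_id,
    det_submatrix_equiv_self, transpose_fromRows, fromRows_mul_fromCols]

theorem contractDet_sq_of_mul_transpose_eq_one {P : Matrix (Fin (m - n)) (Fin m) ℝ}
    (hP : P * Pᵀ = 1) : contractDet hm L P ^ 2 = (L * Lᵀ - L * Pᵀ * (P * Lᵀ)).det := by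
  rw [contractDet_sq, hP, det_fromBlocks_one₂₂]

theorem mul_transpose_eq_add_of_compl {k l : ℕ} (s : Idx m k) (t : Idx m l) (ht : t.1 = s.1ᶜ) :
    L * Lᵀ = L.submatrix id (idxEmb s) * (L.submatrix id (idxEmb s))ᵀ +
      L.submatrix id (idxEmb t) * (L.submatrix id (idxEmb t))ᵀ := by
  ext i i'
  simp only [mul_apply, Matrix.add_apply, transpose_apply, submatrix_apply, id_eq]
  rw [sum_comp_idxEmb s fun x => L i x * L i' x, sum_comp_idxEmb t fun x => L i x * L i' x, ht,
    Finset.sum_add_sum_compl]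

def idxComplEquiv : Idx m (m - n) ≃ Idx m n where
  toFun s := ⟨s.1ᶜ, by rw [Finset.card_compl, s.2, Fintype.card_fin]; omega⟩
  invFun t := ⟨t.1ᶜ, by rw [Finset.card_compl, t.2, Fintype.card_fin]⟩
  left_inv s := Subtype.ext (compl_compl _)
  right_inv t := Subtype.ext (compl_compl _)

theorem sum_MnVecG_sq : ∑ s, MnVecG hm L s ^ 2 = (L * Lᵀ).det := by
  rw [det_mul_transpose_self_eq_sum_colMinor_sq, ← (idxComplEquiv hm).sum_comp]
  refine Finset.sum_congr rfl fun s _ => ?_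
  have hsplit := mul_transpose_eq_add_of_compl L s (idxComplEquiv hm s) rfl
  rw [MnVecG_eq_contractDet_coordProj,
    contractDet_sq_of_mul_transpose_eq_one _ _ (coordProj_mul_transpose s),
    ← transpose_transpose (coordProj s * Lᵀ), transpose_mul, transpose_transpose,
    mul_transpose_coordProj, hsplit, add_sub_cancel_left, det_mul, det_transpose, colMinor, sq]

theorem eucNorm_MnVecG : eucNorm (MnVecG hm L) = √(L * Lᵀ).det := by
  rw [eucNorm, sum_MnVecG_sq]

theorem abs_contractDet_le {P : Matrix (Fin (m - n)) (Fin m) ℝ} (hP : P * Pᵀ = 1) :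
    |contractDet hm L P| ≤ eucNorm (MnVecG hm L) := by
  have hcs := Finset.sum_mul_sq_le_sq_mul_sq Finset.univ P.colMinor (MnVecG hm L)
  rw [← det_mul_transpose_self_eq_sum_colMinor_sq, hP, det_one, one_mul,
    ← contractDet_eq_sum_colMinor_mul_MnVecG] at hcs
  exact Real.abs_le_sqrt hcs

theorem abs_contractDet_eq {P : Matrix (Fin (m - n)) (Fin m) ℝ} (hP : P * Pᵀ = 1)
    (hLP : L * Pᵀ = 0) : |contractDet hm L P| = eucNorm (MnVecG hm L) := by
  have hsq := contractDet_sq_of_mul_transpose_eq_one hm L hP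
  rw [hLP, Matrix.zero_mul, sub_zero] at hsq
  rw [eucNorm_MnVecG, ← hsq, Real.sqrt_sq_eq_abs]

end Contraction

theorem stmt1_general {m n : ℕ} (hm : n ≤ m) (L : Matrix (Fin n) (Fin m) ℝ) :
    sSup {r : ℝ | ∃ π : Matrix (Fin (m - n)) (Fin m) ℝ,
        π * π.transpose = 1 ∧ r = |contractDet hm L π|} = eucNorm (MnVecG hm L) ∧
    (L.rank = n →
      (∃ π : Matrix (Fin (m - n)) (Fin m) ℝ, π * π.transpose = 1 ∧ L * π.transpose = 0) ∧
      ∀ π : Matrix (Fin (m - n)) (Fin m) ℝ, π * π.transpose = 1 → L * π.transpose = 0 →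
        |contractDet hm L π| = eucNorm (MnVecG hm L)) := by
  obtain ⟨P₀, hP₀, hLP₀⟩ :=
    exists_mul_transpose_eq_one_and_mul_transpose_eq_zero (k := m - n) L (by omega)
  have hbound : eucNorm (MnVecG hm L) ∈ upperBounds {r : ℝ | ∃ π : Matrix (Fin (m - n)) (Fin m) ℝ,
      π * π.transpose = 1 ∧ r = |contractDet hm L π|} := by
    rintro r ⟨π, hπ, rfl⟩
    exact abs_contractDet_le hm L hπ
  refine ⟨IsGreatest.csSup_eq ⟨⟨P₀, hP₀, (abs_contractDet_eq hm L hP₀ hLP₀).symm⟩, hbound⟩,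
    fun _ => ⟨⟨P₀, hP₀, hLP₀⟩, fun π hπ hLπ => abs_contractDet_eq hm L hπ hLπ⟩⟩

/-- For any `L : ℝᵐ → ℝⁿ` (`n ≤ m`), the supremum over orthogonal
projections `π : ℝᵐ → ℝ^{m-n}` (i.e. `π ∘ π* = I`) of `|MₙL ⌟ dπ|` equals the Euclidean
norm `|MₙL|`; moreover if `rank L = n` the supremum is attained at any orthogonal
projection onto `ker L` (characterized by `π π* = I` and `L π* = 0`), and such a
projection exists. -/
theorem stmt1 {m n : ℕ} (hn : 1 ≤ n) (hm : n ≤ m) (L : Matrix (Fin n) (Fin m) ℝ) :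
    sSup {r : ℝ | ∃ π : Matrix (Fin (m - n)) (Fin m) ℝ,
        π * π.transpose = 1 ∧ r = |contractDet hm L π|} = eucNorm (MnVecG hm L) ∧
    (L.rank = n →
      (∃ π : Matrix (Fin (m - n)) (Fin m) ℝ, π * π.transpose = 1 ∧ L * π.transpose = 0) ∧
      ∀ π : Matrix (Fin (m - n)) (Fin m) ℝ, π * π.transpose = 1 → L * π.transpose = 0 →
        |contractDet hm L π| = eucNorm (MnVecG hm L)) :=
  stmt1_general hm L

end
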